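/- arXiv:1507.04647 — 2 statements merged into one kernel-verified Lean document; each statement's English description precedes it below -/
import Mathlib

section
/- Let (a_1, ..., a_m) and (a'_1, ..., a'_n) be non-increasing sequences of non-negative integers, and let (b_1, ..., b_m) and (b'_1, ..., b'_n) be sequences of non-negative integers with a_i ≤ b_i for all i and a'_j ≤ b'_j for all j. Then there exists a bipartite graph H with partite sets {u_1, ..., u_m} and {v_1, ..., v_n} satisfying a_i ≤ deg_H(u_i) ≤ b_i for all i and a'_j ≤ deg_H(v_j) ≤ b'_j for all j, if and only if for every k ∈ [m], Σ_{i=1}^k a_i ≤ Σ_{j=1}^n min{k, b'_j}, and for every k ∈ [n], Σ_{j=1}^k a'_j ≤ Σ_{i=1}^m min{k, b_i}. -/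
/-!
Necessity is double counting: the rows of a set `R` send at most `min (#R) (b' j)` edges to
column `j`. For sufficiency take an edge set within the upper bounds whose total shortfall
`∑ (a i - deg i) + ∑ (a' j - deg j)` (truncated subtraction) is minimal. If a row `i₀` is still
short, let `R` consist of `i₀` and the rows reached from it by alternating paths
(non-edge, edge, non-edge, …). By minimality every column reached is saturated and every row of
`R` is at most at its lower bound, for otherwise augmenting along the path, or shifting an edge
along it, would reduce the shortfall; a column that is not reached is adjacent to all of `R`.
Counting the edges at `R` gives `∑ j, min (#R) (b' j) < ∑ i ∈ R, a i`, and for non-increasing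
`a` the right-hand side is at most the sum of the first `#R` entries. Columns are handled by
transposing.
-/

open Finset

/-- The degree of a vertex in a simple graph. -/
noncomputable def deg {V : Type*} (G : SimpleGraph V) (v : V) : ℕ := Nat.card {u // G.Adj v u}

/-- `D` is a dominating set of `G`. -/
def DomSet {V : Type*} (G : SimpleGraph V) (D : Set V) : Prop := ∀ v ∉ D, ∃ u ∈ D, G.Adj u v

/-- `S` is an independent set of `G`. -/
def IndepSet {V : Type*} (G : SimpleGraph V) (S : Set V) : Prop :=
  ∀ u ∈ S, ∀ v ∈ S, ¬ G.Adj u v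

/-- The domination number of `G`. -/
noncomputable def domNum {V : Type*} [Fintype V] (G : SimpleGraph V) : ℕ :=
  sInf {k | ∃ D : Finset V, D.card = k ∧ DomSet G ↑D}

/-- The independence number of `G`. -/
noncomputable def indepNum {V : Type*} [Fintype V] (G : SimpleGraph V) : ℕ :=
  sSup {k | ∃ S : Finset V, S.card = k ∧ IndepSet G ↑S}

/-- Sum of the first `k` entries `d_1 + ... + d_k` (0-indexed: indices `< k`). -/
def psum {n : ℕ} (d : Fin n → ℕ) (k : ℕ) : ℕ := ∑ i : Fin n, if (i : ℕ) < k then d i else 0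

/-- Sum of the remaining entries `d_{k+1} + ... + d_n` (0-indexed: indices `≥ k`). -/
def ssum {n : ℕ} (d : Fin n → ℕ) (k : ℕ) : ℕ := ∑ i : Fin n, if k ≤ (i : ℕ) then d i else 0

/-- Slater's bound `sl(d) = min{k ∈ [n] : d_1 + ... + d_k ≥ n - k}`. -/
noncomputable def slater (n : ℕ) (d : Fin n → ℕ) : ℕ := sInf {k | 1 ≤ k ∧ k ≤ n ∧ n - k ≤ psum d k}

/-- The annihilation number `a(d) = n - min{k ∈ [n] : Σ_{i≤k} d_i ≥ Σ_{i>k} d_i}`. -/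
noncomputable def annih (n : ℕ) (d : Fin n → ℕ) : ℕ := n - sInf {k | 1 ≤ k ∧ k ≤ n ∧ ssum d k ≤ psum d k}

/-- The number of entries of `d` equal to `j`. -/
def nCount {n : ℕ} (d : Fin n → ℕ) (j : ℕ) : ℕ := (Finset.univ.filter fun i => d i = j).card

/-- The number of entries of `d` that are at least `2`. -/
def nGe2 {n : ℕ} (d : Fin n → ℕ) : ℕ := (Finset.univ.filter fun i => 2 ≤ d i).card

/-- `F` is a forest realization of the degree sequence `d`. -/
def IsForestReal {n : ℕ} (d : Fin n → ℕ) (F : SimpleGraph (Fin n)) : Prop :=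
  F.IsAcyclic ∧ ∀ i, deg F i = d i

/-- The minimum domination number over all forest realizations of `d`. -/
noncomputable def gammaFmin {n : ℕ} (d : Fin n → ℕ) : ℕ :=
  sInf {m | ∃ F : SimpleGraph (Fin n), IsForestReal d F ∧ domNum F = m}

/-- The maximum independence number over all forest realizations of `d`. -/
noncomputable def alphaFmax {n : ℕ} (d : Fin n → ℕ) : ℕ :=
  sSup {m | ∃ F : SimpleGraph (Fin n), IsForestReal d F ∧ indepNum F = m}

namespace BipartiteDegree

section Degrees

variable {α β : Type*}

def transpose (E : Finset (α × β)) : Finset (β × α) := E.map (Equiv.prodComm α β).toEmbedding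

@[simp]
lemma mem_transpose {E : Finset (α × β)} {j : β} {i : α} : (j, i) ∈ transpose E ↔ (i, j) ∈ E := by
  simp [transpose]

lemma transpose_transpose (E : Finset (α × β)) : transpose (transpose E) = E := by
  ext ⟨i, j⟩; simp

variable [DecidableEq α] [DecidableEq β]

def rowDeg [Fintype β] (E : Finset (α × β)) (i : α) : ℕ := #{j | (i, j) ∈ E}

def colDeg [Fintype α] (E : Finset (α × β)) (j : β) : ℕ := #{i | (i, j) ∈ E}

@[simp]
lemma rowDeg_transpose [Fintype α] (E : Finset (α × β)) : rowDeg (transpose E) = colDeg E := by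
  ext j; simp [rowDeg, colDeg]

@[simp]
lemma colDeg_transpose [Fintype β] (E : Finset (α × β)) : colDeg (transpose E) = rowDeg E := by
  ext i; simp [rowDeg, colDeg]

lemma rowDeg_insert [Fintype β] {E : Finset (α × β)} {i : α} {j : β} (h : (i, j) ∉ E) :
    rowDeg (insert (i, j) E) = rowDeg E + Pi.single i 1 := by
  ext p
  rcases eq_or_ne p i with rfl | hp
  · rw [Pi.add_apply, Pi.single_eq_same, rowDeg, rowDeg, ← card_insert_of_notMem (by simpa using h)]
    congr 1; ext q; simp
  · simp [rowDeg, hp]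

lemma rowDeg_erase [Fintype β] {E : Finset (α × β)} {i : α} {j : β} (h : (i, j) ∈ E) :
    rowDeg (E.erase (i, j)) + Pi.single i 1 = rowDeg E := by
  rw [← rowDeg_insert (notMem_erase _ _), insert_erase h]

lemma colDeg_insert [Fintype α] {E : Finset (α × β)} {i : α} {j : β} (h : (i, j) ∉ E) :
    colDeg (insert (i, j) E) = colDeg E + Pi.single j 1 := by
  rw [← rowDeg_transpose, ← rowDeg_transpose, ← rowDeg_insert (by simpa using h)]
  congr 1; ext ⟨q, p⟩; simp [and_comm]

lemma colDeg_erase [Fintype α] {E : Finset (α × β)} {i : α} {j : β} (h : (i, j) ∈ E) :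
    colDeg (E.erase (i, j)) + Pi.single j 1 = colDeg E := by
  rw [← colDeg_insert (notMem_erase _ _), insert_erase h]

lemma sum_rowDeg_eq [Fintype β] (E : Finset (α × β)) (R : Finset α) :
    ∑ i ∈ R, rowDeg E i = ∑ j, #{i ∈ R | (i, j) ∈ E} :=
  sum_card_bipartiteAbove_eq_sum_card_bipartiteBelow (fun i j => (i, j) ∈ E)

lemma sum_rowDeg_le [Fintype α] [Fintype β] (E : Finset (α × β)) (R : Finset α) :
    ∑ i ∈ R, rowDeg E i ≤ ∑ j, min #R (colDeg E j) := by
  rw [sum_rowDeg_eq]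
  exact sum_le_sum fun j _ =>
    le_min (card_filter_le _ _) (card_le_card (filter_subset_filter _ (subset_univ R)))

def moveEdge (E : Finset (α × β)) (i i' : α) (j : β) : Finset (α × β) :=
  insert (i, j) (E.erase (i', j))

lemma rowDeg_moveEdge [Fintype β] {E : Finset (α × β)} {i i' : α} {j : β} (h : (i, j) ∉ E)
    (h' : (i', j) ∈ E) :
    rowDeg (moveEdge E i i' j) + Pi.single i' 1 = rowDeg E + Pi.single i 1 := by
  rw [moveEdge, rowDeg_insert (fun hm => h (mem_of_mem_erase hm)), add_right_comm, rowDeg_erase h']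

lemma colDeg_moveEdge [Fintype α] {E : Finset (α × β)} {i i' : α} {j : β} (h : (i, j) ∉ E)
    (h' : (i', j) ∈ E) : colDeg (moveEdge E i i' j) = colDeg E := by
  rw [moveEdge, colDeg_insert (fun hm => h (mem_of_mem_erase hm)), colDeg_erase h']

end Degrees

section AugPath

variable {α β : Type*} [DecidableEq α] [DecidableEq β]

/-- An alternating path `i → j' → i' → ⋯ → j` from row `i` to column `j` that starts and ends with
a non-edge. Its tail is a path in `moveEdge E i i' j'`, the edge set after the first exchange, so
no simplicity condition is needed. -/
inductive AugPath : Finset (α × β) → α → β → Prop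
  | single {E : Finset (α × β)} {i : α} {j : β} : (i, j) ∉ E → AugPath E i j
  | cons {E : Finset (α × β)} {i i' : α} {j' j : β} :
      (i, j') ∉ E → (i', j') ∈ E → AugPath (moveEdge E i i' j') i' j → AugPath E i j

namespace AugPath

variable {E : Finset (α × β)} {i : α} {j : β}

lemma extend (h : AugPath E i j) {p : α} {j₂ : β} (hp : (p, j) ∈ E) (hp₂ : (p, j₂) ∉ E) :
    AugPath E i j₂ := by
  induction h generalizing p j₂ with
  | @single E i j h0 =>
    have hpi : p ≠ i := by rintro rfl; exact h0 hp
    exact cons h0 hp (single (by simp [moveEdge, hpi, hp₂]))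
  | @cons E i i' j' j h0 h1 _ ih =>
    by_cases hA : p = i' ∧ j = j'
    · obtain ⟨rfl, rfl⟩ := hA
      have hpi : p ≠ i := by rintro rfl; exact h0 h1
      exact cons h0 h1 (single (by simp [moveEdge, hpi, hp₂]))
    by_cases hB : p = i ∧ j₂ = j'
    · obtain ⟨rfl, rfl⟩ := hB
      exact single h0
    refine cons h0 h1 (ih (p := p) ?_ ?_)
    · simp only [moveEdge, mem_insert, mem_erase, ne_eq, Prod.mk.injEq]
      tauto
    · simp only [moveEdge, mem_insert, mem_erase, ne_eq, Prod.mk.injEq]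
      tauto

variable [Fintype α] [Fintype β]

lemma exists_augment (h : AugPath E i j) :
    ∃ F : Finset (α × β),
      rowDeg F = rowDeg E + Pi.single i 1 ∧ colDeg F = colDeg E + Pi.single j 1 := by
  induction h with
  | @single E i j h0 => exact ⟨insert (i, j) E, rowDeg_insert h0, colDeg_insert h0⟩
  | @cons E i i' j' j h0 h1 _ ih =>
    obtain ⟨F, hr, hc⟩ := ih
    exact ⟨F, hr.trans (rowDeg_moveEdge h0 h1), hc.trans (by rw [colDeg_moveEdge h0 h1])⟩

lemma exists_transfer (h : AugPath E i j) {i₁ : α} (h₁ : (i₁, j) ∈ E) :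
    ∃ F : Finset (α × β),
      rowDeg F + Pi.single i₁ 1 = rowDeg E + Pi.single i 1 ∧ colDeg F = colDeg E := by
  induction h generalizing i₁ with
  | @single E i j h0 => exact ⟨moveEdge E i i₁ j, rowDeg_moveEdge h0 h₁, colDeg_moveEdge h0 h₁⟩
  | @cons E i i' j' j h0 h1 _ ih =>
    by_cases hi : i₁ = i
    · exact ⟨E, by rw [hi], rfl⟩
    by_cases hm : (i₁, j) ∈ moveEdge E i i' j'
    · obtain ⟨F, hr, hc⟩ := ih hm
      exact ⟨F, hr.trans (rowDeg_moveEdge h0 h1), hc.trans (colDeg_moveEdge h0 h1)⟩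
    · obtain ⟨rfl, rfl⟩ : i₁ = i' ∧ j = j' := by
        simp only [moveEdge, mem_insert, mem_erase, ne_eq, Prod.mk.injEq] at hm
        tauto
      exact ⟨moveEdge E i i₁ j, rowDeg_moveEdge h0 h1, colDeg_moveEdge h0 h1⟩

end AugPath

end AugPath

section Deficit

variable {ι : Type*} {a b r r' : ι → ℕ} {i i₀ : ι}

def deficit [Fintype ι] (a r : ι → ℕ) : ℕ := ∑ i, (a i - r i)

lemma deficit_anti [Fintype ι] : Antitone (deficit a) :=
  fun _ _ h => sum_le_sum fun i _ => Nat.sub_le_sub_left (h i) _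

lemma deficit_add_single_lt [Fintype ι] [DecidableEq ι] (h : r i < a i) :
    deficit a (r + Pi.single i 1) < deficit a r := by
  refine sum_lt_sum (fun p _ => Nat.sub_le_sub_left le_self_add _) ⟨i, mem_univ i, ?_⟩
  simp only [Pi.add_apply, Pi.single_eq_same]
  omega

lemma deficit_lt_of_add_single_eq [Fintype ι] [DecidableEq ι]
    (h : r' + Pi.single i 1 = r + Pi.single i₀ 1) (h₀ : r i₀ < a i₀) (hi : a i < r i) :
    deficit a r' < deficit a r := by
  have hne : i ≠ i₀ := by rintro rfl; omega
  have hri : a i ≤ r' i := by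
    have := congrFun h i
    simp only [Pi.add_apply, Pi.single_eq_same, Pi.single_eq_of_ne hne] at this
    omega
  have hr' : deficit a r' = deficit a (r' + Pi.single i 1) := by
    refine sum_congr rfl fun p _ => ?_
    rcases eq_or_ne p i with rfl | hp
    · simp only [Pi.add_apply, Pi.single_eq_same]
      omega
    · simp [hp]
  rw [hr', h]
  exact deficit_add_single_lt h₀

lemma add_single_le [DecidableEq ι] (h : r ≤ b) (hi : r i < b i) : r + Pi.single i 1 ≤ b := by
  intro p
  rcases eq_or_ne p i with rfl | hp
  · simpa using hi
  · simpa [hp] using h p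

end Deficit

section Optimal

variable {α β : Type*} [Fintype α] [Fintype β] [DecidableEq α] [DecidableEq β]
  {a b : α → ℕ} {a' b' : β → ℕ} {E : Finset (α × β)}

def feasible (b : α → ℕ) (b' : β → ℕ) : Set (Finset (α × β)) := {E | rowDeg E ≤ b ∧ colDeg E ≤ b'}

def deficiency (a : α → ℕ) (a' : β → ℕ) (E : Finset (α × β)) : ℕ :=
  deficit a (rowDeg E) + deficit a' (colDeg E)

lemma transpose_mem_feasible (hE : E ∈ feasible b b') : transpose E ∈ feasible b' b := by
  simpa [feasible, and_comm] using hE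

lemma deficiency_transpose : deficiency a' a (transpose E) = deficiency a a' E := by
  simp [deficiency, add_comm]

lemma isMinOn_deficiency_transpose (hmin : IsMinOn (deficiency a a') (feasible b b') E) :
    IsMinOn (deficiency a' a) (feasible b' b) (transpose E) := fun F hF =>
  calc deficiency a' a (transpose E) = deficiency a a' E := deficiency_transpose
    _ ≤ deficiency a a' (transpose F) := hmin (transpose_mem_feasible hF)
    _ = deficiency a' a F := by rw [← deficiency_transpose, transpose_transpose]

lemma le_colDeg_of_augPath (hab : a ≤ b) (hE : E ∈ feasible b b')
    (hmin : IsMinOn (deficiency a a') (feasible b b') E) {i₀ : α} (hi₀ : rowDeg E i₀ < a i₀)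
    {j : β} (hj : AugPath E i₀ j) : b' j ≤ colDeg E j := by
  by_contra! hlt
  obtain ⟨F, hr, hc⟩ := hj.exists_augment
  have hF : F ∈ feasible b b' :=
    ⟨hr ▸ add_single_le hE.1 (hi₀.trans_le (hab i₀)), hc ▸ add_single_le hE.2 hlt⟩
  have hlt' : deficiency a a' F < deficiency a a' E := by
    rw [deficiency, deficiency, hr, hc]
    exact add_lt_add_of_lt_of_le (deficit_add_single_lt hi₀) (deficit_anti le_self_add)
  exact (hmin hF).not_gt hlt'

lemma rowDeg_le_of_augPath (hab : a ≤ b) (hE : E ∈ feasible b b')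
    (hmin : IsMinOn (deficiency a a') (feasible b b') E) {i₀ : α} (hi₀ : rowDeg E i₀ < a i₀)
    {i : α} {j : β} (hj : AugPath E i₀ j) (hij : (i, j) ∈ E) : rowDeg E i ≤ a i := by
  by_contra! hlt
  obtain ⟨F, hr, hc⟩ := hj.exists_transfer hij
  have hF : F ∈ feasible b b' :=
    ⟨le_self_add.trans (hr ▸ add_single_le hE.1 (hi₀.trans_le (hab i₀))), hc ▸ hE.2⟩
  have hlt' : deficiency a a' F < deficiency a a' E := by
    rw [deficiency, deficiency, hc, add_lt_add_iff_right]
    exact deficit_lt_of_add_single_eq hr hi₀ hlt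
  exact (hmin hF).not_gt hlt'

theorem exists_sum_lt_of_rowDeg_lt (hab : a ≤ b) (hE : E ∈ feasible b b')
    (hmin : IsMinOn (deficiency a a') (feasible b b') E) {i₀ : α} (hi₀ : rowDeg E i₀ < a i₀) :
    ∃ R : Finset α, ∑ j, min #R (b' j) < ∑ i ∈ R, a i := by
  classical
  set R : Finset α := {i | i = i₀ ∨ ∃ j, AugPath E i₀ j ∧ (i, j) ∈ E}
  have hi₀R : i₀ ∈ R := by simp [R]
  refine ⟨R, ?_⟩
  calc ∑ j, min #R (b' j) ≤ ∑ j, #{i ∈ R | (i, j) ∈ E} := sum_le_sum fun j _ => ?_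
    _ = ∑ i ∈ R, rowDeg E i := (sum_rowDeg_eq E R).symm
    _ < ∑ i ∈ R, a i := sum_lt_sum (fun i hi => ?_) ⟨i₀, hi₀R, hi₀⟩
  · by_cases hj : AugPath E i₀ j
    · refine (min_le_right _ _).trans ((le_colDeg_of_augPath hab hE hmin hi₀ hj).trans_eq ?_)
      rw [colDeg]
      congr 1
      ext i
      simpa [R] using fun hij => Or.inr ⟨j, hj, hij⟩
    · refine (min_le_left _ _).trans_eq ?_
      rw [filter_true_of_mem]
      intro i hi
      by_contra hij
      rcases (mem_filter.1 hi).2 with rfl | ⟨j', hj', hij'⟩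
      · exact hj (.single hij)
      · exact hj (hj'.extend hij' hij)
  · rcases (mem_filter.1 hi).2 with rfl | ⟨j, hj, hij⟩
    · exact hi₀.le
    · exact rowDeg_le_of_augPath hab hE hmin hi₀ hj hij

theorem exists_of_forall_sum_le (hab : a ≤ b) (hab' : a' ≤ b')
    (hR : ∀ R : Finset α, ∑ i ∈ R, a i ≤ ∑ j, min #R (b' j))
    (hC : ∀ C : Finset β, ∑ j ∈ C, a' j ≤ ∑ i, min #C (b i)) :
    ∃ E : Finset (α × β), (∀ i, a i ≤ rowDeg E i ∧ rowDeg E i ≤ b i) ∧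
      (∀ j, a' j ≤ colDeg E j ∧ colDeg E j ≤ b' j) := by
  obtain ⟨E, hE, hmin⟩ := Set.exists_min_image (feasible b b') (deficiency a a') (Set.toFinite _)
    ⟨∅, fun _ => by simp [rowDeg], fun _ => by simp [colDeg]⟩
  have hrow (i : α) : a i ≤ rowDeg E i := by
    by_contra! hi
    obtain ⟨R, hlt⟩ := exists_sum_lt_of_rowDeg_lt hab hE hmin hi
    exact (hR R).not_gt hlt
  have hcol (j : β) : a' j ≤ colDeg E j := by
    by_contra! hj
    obtain ⟨C, hlt⟩ := exists_sum_lt_of_rowDeg_lt hab' (transpose_mem_feasible hE)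
      (isMinOn_deficiency_transpose hmin) (by rwa [rowDeg_transpose])
    exact (hC C).not_gt (by simpa using hlt)
  exact ⟨E, fun i => ⟨hrow i, hE.1 i⟩, fun j => ⟨hcol j, hE.2 j⟩⟩

theorem sum_le_sum_min_of_le_rowDeg {E : Finset (α × β)} (ha : ∀ i, a i ≤ rowDeg E i)
    (hb' : ∀ j, colDeg E j ≤ b' j) (R : Finset α) : ∑ i ∈ R, a i ≤ ∑ j, min #R (b' j) :=
  calc ∑ i ∈ R, a i ≤ ∑ i ∈ R, rowDeg E i := sum_le_sum fun i _ => ha i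
    _ ≤ ∑ j, min #R (colDeg E j) := sum_rowDeg_le E R
    _ ≤ ∑ j, min #R (b' j) := sum_le_sum fun j _ => min_le_min_left _ (hb' j)

theorem exists_rowDeg_colDeg_iff (hab : a ≤ b) (hab' : a' ≤ b') :
    (∃ E : Finset (α × β), (∀ i, a i ≤ rowDeg E i ∧ rowDeg E i ≤ b i) ∧
      (∀ j, a' j ≤ colDeg E j ∧ colDeg E j ≤ b' j)) ↔
    (∀ R : Finset α, ∑ i ∈ R, a i ≤ ∑ j, min #R (b' j)) ∧
      (∀ C : Finset β, ∑ j ∈ C, a' j ≤ ∑ i, min #C (b i)) := by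
  refine ⟨fun ⟨E, hr, hc⟩ => ⟨?_, ?_⟩, fun ⟨hR, hC⟩ => exists_of_forall_sum_le hab hab' hR hC⟩
  · exact sum_le_sum_min_of_le_rowDeg (fun i => (hr i).1) (fun j => (hc j).2)
  · exact sum_le_sum_min_of_le_rowDeg (E := transpose E) (by simpa using fun j => (hc j).1)
      (by simpa using fun i => (hr i).2)

end Optimal

section Graph

variable {α β : Type*}

def toGraph (E : Finset (α × β)) : SimpleGraph (α ⊕ β) :=
  SimpleGraph.fromRel fun
    | .inl i, .inr j => (i, j) ∈ E
    | _, _ => False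

variable [Fintype α] [Fintype β]

open Classical in
noncomputable def edgesOf (H : SimpleGraph (α ⊕ β)) : Finset (α × β) :=
  {p | H.Adj (.inl p.1) (.inr p.2)}

lemma mem_edgesOf {H : SimpleGraph (α ⊕ β)} {i : α} {j : β} :
    (i, j) ∈ edgesOf H ↔ H.Adj (.inl i) (.inr j) := by
  simp [edgesOf]

lemma edgesOf_toGraph (E : Finset (α × β)) : edgesOf (toGraph E) = E := by
  ext ⟨i, j⟩
  simp [mem_edgesOf, toGraph]

variable [DecidableEq α] [DecidableEq β]

lemma deg_inl (H : SimpleGraph (α ⊕ β)) (hA : ∀ i i', ¬ H.Adj (.inl i) (.inl i')) (i : α) :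
    deg H (.inl i) = rowDeg (edgesOf H) i := by
  classical
  have : IsEmpty {i' // H.Adj (.inl i) (.inl i')} := ⟨fun x => hA i x.1 x.2⟩
  rw [deg, Nat.card_congr Equiv.subtypeSum, Nat.card_sum, Nat.card_of_isEmpty, zero_add,
    Nat.card_eq_fintype_card, Fintype.card_subtype]
  simp [rowDeg, mem_edgesOf]

lemma deg_inr (H : SimpleGraph (α ⊕ β)) (hB : ∀ j j', ¬ H.Adj (.inr j) (.inr j')) (j : β) :
    deg H (.inr j) = colDeg (edgesOf H) j := by
  classical
  have : IsEmpty {j' // H.Adj (.inr j) (.inr j')} := ⟨fun x => hB j x.1 x.2⟩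
  rw [deg, Nat.card_congr Equiv.subtypeSum, Nat.card_sum,
    Nat.card_of_isEmpty (α := {j' // H.Adj (.inr j) (.inr j')}), add_zero,
    Nat.card_eq_fintype_card, Fintype.card_subtype]
  simp [colDeg, mem_edgesOf, H.adj_comm]

theorem exists_graph_iff (a b : α → ℕ) (a' b' : β → ℕ) :
    (∃ H : SimpleGraph (α ⊕ β),
      (∀ i i', ¬ H.Adj (.inl i) (.inl i')) ∧ (∀ j j', ¬ H.Adj (.inr j) (.inr j')) ∧
      (∀ i, a i ≤ deg H (.inl i) ∧ deg H (.inl i) ≤ b i) ∧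
      (∀ j, a' j ≤ deg H (.inr j) ∧ deg H (.inr j) ≤ b' j)) ↔
    ∃ E : Finset (α × β), (∀ i, a i ≤ rowDeg E i ∧ rowDeg E i ≤ b i) ∧
      (∀ j, a' j ≤ colDeg E j ∧ colDeg E j ≤ b' j) := by
  constructor
  · rintro ⟨H, hA, hB, hr, hc⟩
    exact ⟨edgesOf H, fun i => deg_inl H hA i ▸ hr i, fun j => deg_inr H hB j ▸ hc j⟩
  · rintro ⟨E, hr, hc⟩
    have hA : ∀ i i', ¬ (toGraph E).Adj (.inl i) (.inl i') := by simp [toGraph]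
    have hB : ∀ j j', ¬ (toGraph E).Adj (.inr j) (.inr j') := by simp [toGraph]
    refine ⟨toGraph E, hA, hB, fun i => ?_, fun j => ?_⟩
    · rw [deg_inl _ hA, edgesOf_toGraph]; exact hr i
    · rw [deg_inr _ hB, edgesOf_toGraph]; exact hc j

end Graph

section Prefix

variable {m : ℕ} {a : Fin m → ℕ}

lemma psum_succ (a : Fin m → ℕ) {k : ℕ} (hk : k < m) : psum a (k + 1) = psum a k + a ⟨k, hk⟩ := by
  have (i : Fin m) : (if (i : ℕ) < k + 1 then a i else 0) =
      (if (i : ℕ) < k then a i else 0) + if ⟨k, hk⟩ = i then a i else 0 := by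
    simp only [Fin.ext_iff]
    split_ifs <;> omega
  rw [psum, psum, sum_congr rfl fun i _ => this i, sum_add_distrib, sum_ite_eq, if_pos (mem_univ _)]

lemma sum_le_psum (ha : Antitone a) (R : Finset (Fin m)) : ∑ i ∈ R, a i ≤ psum a #R := by
  induction R using Finset.induction_on_max with
  | empty => simp
  | insert x R hlt ih =>
    have hx : x ∉ R := fun h => (hlt x h).false
    have hR : #R ≤ x := by
      simpa using card_le_card fun y hy => mem_Iio.2 (hlt y hy)
    rw [sum_insert hx, card_insert_of_notMem hx, psum_succ a (hR.trans_lt x.2), add_comm]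
    exact add_le_add ih (ha (show (⟨#R, _⟩ : Fin m) ≤ x from hR))

theorem forall_sum_le_iff_forall_psum_le (ha : Antitone a) (g : ℕ → ℕ) :
    (∀ R : Finset (Fin m), ∑ i ∈ R, a i ≤ g #R) ↔ ∀ k, 1 ≤ k → k ≤ m → psum a k ≤ g k := by
  constructor
  · intro h k _ hk
    simpa [psum, sum_filter, Fin.card_filter_val_lt, hk] using h {i | (i : ℕ) < k}
  · intro h R
    rcases R.eq_empty_or_nonempty with rfl | hne
    · simp
    · exact (sum_le_psum ha R).trans (h _ hne.card_pos (by simpa using card_le_univ R))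

end Prefix

end BipartiteDegree

theorem stmt18 (m n : ℕ) (a b : Fin m → ℕ) (a' b' : Fin n → ℕ)
    (ha : Antitone a) (ha' : Antitone a')
    (hab : ∀ i, a i ≤ b i) (hab' : ∀ j, a' j ≤ b' j) :
    (∃ H : SimpleGraph (Fin m ⊕ Fin n),
      (∀ i i', ¬ H.Adj (Sum.inl i) (Sum.inl i')) ∧
      (∀ j j', ¬ H.Adj (Sum.inr j) (Sum.inr j')) ∧
      (∀ i, a i ≤ deg H (Sum.inl i) ∧ deg H (Sum.inl i) ≤ b i) ∧
      (∀ j, a' j ≤ deg H (Sum.inr j) ∧ deg H (Sum.inr j) ≤ b' j)) ↔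
    ((∀ k, 1 ≤ k → k ≤ m → psum a k ≤ ∑ j : Fin n, min k (b' j)) ∧
     (∀ k, 1 ≤ k → k ≤ n → psum a' k ≤ ∑ i : Fin m, min k (b i))) :=
  (BipartiteDegree.exists_graph_iff a b a' b').trans <|
    (BipartiteDegree.exists_rowDeg_colDeg_iff hab hab').trans <|
      and_congr (BipartiteDegree.forall_sum_le_iff_forall_psum_le ha fun k => ∑ j, min k (b' j))
        (BipartiteDegree.forall_sum_le_iff_forall_psum_le ha' fun k => ∑ i, min k (b i))
end

section
/- Let d = (d_1, ..., d_n) be a non-increasing sequence of positive integers with even sum at most 2n - 2, and let k ∈ [n]. There exists a forest F with vertex set {u_1, ..., u_n}, d_F(u_i) = d_i for all i, such that {u_1, ..., u_k} is a dominating set and {u_{k+1}, ..., u_n} is an independent set, if and only if Σ_{i=1}^k d_i ≥ Σ_{i=k+1}^n d_i. -/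
open Finset

/-!
Necessity is double counting: an edge at a vertex of an independent set `T` ends outside `T`, so
the degrees on `T` sum to at most the degrees off `T`.

For sufficiency, allow vertices of degree zero and induct on the degree sum. `IsAdmissible d T`
asks for an even degree sum, at most `#support - 1` edges and at most half of the degree sum on
`T`. The edge bound forces a vertex `l` of degree one. Pair it with a vertex `j` of degree at least
two (or of degree one if all degrees are at most one), on the other side of `T` unless `T` carries
no degree at all; then removing the edge `lj` keeps the data admissible. A forest realising the
reduced data has `l` isolated, so adding `lj` back creates no cycle. Domination comes for free:
every vertex of `T` has a neighbour, necessarily outside `T`.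
-/

open SimpleGraph

lemma deg_eq_ncard {V : Type*} (G : SimpleGraph V) (v : V) :
    deg G v = (G.neighborSet v).ncard := by
  rw [deg, ← Nat.card_coe_set_eq]; rfl

lemma deg_eq_degree {V : Type*} [Fintype V] (G : SimpleGraph V) [DecidableRel G.Adj] (v : V) :
    deg G v = G.degree v :=
  Nat.card_eq_fintype_card.trans (G.card_neighborSet_eq_degree v)

lemma deg_bot {V : Type*} (v : V) : deg (⊥ : SimpleGraph V) v = 0 := by
  simp [deg_eq_ncard]

lemma not_reachable_of_deg_eq_zero {V : Type*} [Finite V] {G : SimpleGraph V} {u v : V}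
    (huv : u ≠ v) (hu : deg G u = 0) : ¬G.Reachable u v := by
  rintro ⟨_ | ⟨hadj, _⟩⟩
  · exact huv rfl
  · rw [deg_eq_ncard, Set.ncard_eq_zero] at hu
    exact Set.eq_empty_iff_forall_notMem.mp hu _ hadj

lemma deg_sup_edge {V : Type*} [Finite V] [DecidableEq V] {G : SimpleGraph V} {s t : V}
    (hst : s ≠ t) (hn : ¬G.Adj s t) (v : V) :
    deg (G ⊔ edge s t) v = deg G v + (if v = s then 1 else 0) + (if v = t then 1 else 0) := by
  simp only [deg_eq_ncard, neighborSet_sup]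
  by_cases hs : v = s
  · subst hs
    have : (edge v t).neighborSet v = {t} := by ext; grind [mem_neighborSet]
    rw [this, Set.union_singleton, Set.ncard_insert_of_notMem (s := G.neighborSet v) hn,
      if_pos rfl, if_neg hst]
  by_cases ht : v = t
  · subst ht
    have : (edge s v).neighborSet v = {s} := by ext; grind [mem_neighborSet]
    rw [this, Set.union_singleton,
      Set.ncard_insert_of_notMem (s := G.neighborSet v) (fun h => hn h.symm),
      if_neg hs, if_pos rfl]
  · have : (edge s t).neighborSet v = ∅ := by ext; grind [mem_neighborSet]
    simp [this, hs, ht]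

lemma sum_deg_le_sum_deg_compl_of_indepSet {V : Type*} [Fintype V] [DecidableEq V]
    (G : SimpleGraph V) {S : Finset V} (hS : IndepSet G S) :
    ∑ v ∈ S, deg G v ≤ ∑ v ∈ Sᶜ, deg G v := by
  classical
  have hcount := sum_card_bipartiteAbove_eq_sum_card_bipartiteBelow (s := S) (t := Sᶜ) G.Adj
  simp only [deg_eq_degree, ← card_neighborFinset_eq_degree]
  calc ∑ v ∈ S, #(G.neighborFinset v)
      = ∑ v ∈ S, #(Sᶜ.bipartiteAbove G.Adj v) := by
        refine sum_congr rfl fun v hv => congrArg card ?_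
        ext u
        simp only [mem_neighborFinset, bipartiteAbove, mem_filter, mem_compl, iff_and_self]
        exact fun h hu => hS v hv u hu h
    _ = ∑ u ∈ Sᶜ, #(S.bipartiteBelow G.Adj u) := hcount
    _ ≤ ∑ u ∈ Sᶜ, #(G.neighborFinset u) := by
        refine sum_le_sum fun u _ => card_le_card fun v => ?_
        simp only [bipartiteBelow, mem_filter, mem_neighborFinset]
        exact fun h => h.2.symm

lemma domSet_compl_of_indepSet {V : Type*} {G : SimpleGraph V} {S : Set V}
    (hS : IndepSet G S) (hpos : ∀ v ∈ S, deg G v ≠ 0) : DomSet G Sᶜ := by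
  intro v hv
  rw [Set.notMem_compl_iff] at hv
  obtain ⟨⟨u, hu⟩⟩ := Nat.card_ne_zero.mp (hpos v hv) |>.1
  exact ⟨u, fun huS => hS v hv u huS hu, hu.symm⟩

lemma exists_opposite_sides {V : Type*} {P Q : V → Prop} (T : Set V) (hP : ∃ x, P x)
    (hQ : ∃ y, Q y) (hin : ∃ t ∈ T, P t ∨ Q t) (hout : ∃ a ∉ T, P a ∨ Q a) :
    ∃ x y, P x ∧ Q y ∧ (x ∈ T ↔ y ∉ T) := by
  by_contra! h
  obtain ⟨x, hx⟩ := hP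
  obtain ⟨y, hy⟩ := hQ
  obtain ⟨t, ht, hPQt⟩ := hin
  obtain ⟨a, ha, hPQa⟩ := hout
  -- otherwise every `P`-vertex is on the side of `y` and every `Q`-vertex on the side of `x`
  have hP' := fun z (hz : P z) => h z y hz hy
  have hQ' := fun z (hz : Q z) => h x z hx hz
  grind

lemma sum_eq_sum_add_ite {V : Type*} [DecidableEq V] {d d' : V → ℕ} {l j : V}
    (hd : ∀ v, d v = d' v + (if v = l then 1 else 0) + (if v = j then 1 else 0))
    (s : Finset V) :
    ∑ v ∈ s, d v = ∑ v ∈ s, d' v + (if l ∈ s then 1 else 0) + (if j ∈ s then 1 else 0) := by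
  simp only [hd, sum_add_distrib, sum_ite_eq']

section DegreeData

variable {V : Type*} [Fintype V]

lemma exists_eq_one_of_sum_le {d : V → ℕ} (h0 : ∑ v, d v ≠ 0)
    (hforest : ∑ v, d v ≤ 2 * #{v | d v ≠ 0} - 2) : ∃ v, d v = 1 := by
  by_contra! h
  have h2 : ∀ v ∈ ({v | d v ≠ 0} : Finset V), 2 ≤ d v := fun v hv => by
    have := (mem_filter.mp hv).2; have := h v; omega
  have := card_nsmul_le_sum _ d 2 h2
  rw [sum_filter_ne_zero, smul_eq_mul] at this
  omega

lemma sum_eq_card_support_of_le_one {d : V → ℕ} (h : ∀ v, d v ≤ 1) :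
    ∑ v, d v = #{v | d v ≠ 0} := by
  rw [← sum_filter_ne_zero, card_eq_sum_ones]
  exact sum_congr rfl fun v hv => by have := (mem_filter.mp hv).2; have := h v; omega

lemma exists_leaf_pair [DecidableEq V] {d : V → ℕ} (T : Finset V) (h0 : ∑ v, d v ≠ 0)
    (hforest : ∑ v, d v ≤ 2 * #{v | d v ≠ 0} - 2) (hT : 2 * ∑ v ∈ T, d v ≤ ∑ v, d v) :
    ∃ l j, d l = 1 ∧ d j ≠ 0 ∧ (2 ≤ d j ∨ ∀ v, d v ≤ 1) ∧ l ≠ j ∧ ¬(l ∈ T ∧ j ∈ T) ∧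
      (l ∉ T → j ∉ T → 2 * ∑ v ∈ T, d v < ∑ v, d v) := by
  obtain ⟨l, hl⟩ := exists_eq_one_of_sum_le h0 hforest
  have hmax : (∃ j, 2 ≤ d j) ∨ ∀ v, d v ≤ 1 := by
    by_contra! h
    obtain ⟨v, hv⟩ := h.2
    exact (h.1 v).not_ge hv
  by_cases hT0 : ∑ v ∈ T, d v = 0
  · have hlt : 2 * ∑ v ∈ T, d v < ∑ v, d v := by omega
    have hout : ∀ v, d v ≠ 0 → v ∉ T := fun v hv hvT => hv (sum_eq_zero_iff.mp hT0 v hvT)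
    obtain ⟨j, hj, hjmax, hjl⟩ : ∃ j, d j ≠ 0 ∧ (2 ≤ d j ∨ ∀ v, d v ≤ 1) ∧ j ≠ l := by
      rcases hmax with ⟨j, hj⟩ | hle
      · exact ⟨j, by omega, Or.inl hj, by rintro rfl; omega⟩
      · have hcard : 1 < #{v | d v ≠ 0} := by
          have := sum_eq_card_support_of_le_one hle; omega
        obtain ⟨j, hj, hjl⟩ := exists_mem_ne hcard l
        exact ⟨j, (mem_filter.mp hj).2, Or.inr hle, hjl⟩
    exact ⟨l, j, hl, hj, hjmax, hjl.symm, fun h => hout l (by omega) h.1, fun _ _ => hlt⟩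
  · have hin : ∃ t ∈ T, d t ≠ 0 := by
      by_contra! h
      exact hT0 (sum_eq_zero h)
    have hout : ∃ a ∉ T, d a ≠ 0 := by
      by_contra! h
      have := sum_subset (subset_univ T) fun v _ hv => h v hv
      omega
    have hPQ : ∀ v, d v ≠ 0 → d v = 1 ∨ d v ≠ 0 ∧ (2 ≤ d v ∨ ∀ w, d w ≤ 1) := fun v hv => by
      omega
    obtain ⟨l, j, hl, ⟨hj, hjmax⟩, hside⟩ := exists_opposite_sides (T : Set V) ⟨l, hl⟩
      (hmax.elim (fun ⟨j, hj⟩ => ⟨j, by omega, Or.inl hj⟩) fun hle => ⟨l, by omega, Or.inr hle⟩)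
      (hin.imp fun t ⟨htT, ht⟩ => ⟨htT, hPQ t ht⟩) (hout.imp fun a ⟨haT, ha⟩ => ⟨haT, hPQ a ha⟩)
    simp only [mem_coe] at hside
    exact ⟨l, j, hl, hj, hjmax, by rintro rfl; tauto, by tauto, by tauto⟩

lemma sum_le_two_mul_card_support_of_eq_add [DecidableEq V] {d d' : V → ℕ} {l j : V}
    (hd : ∀ v, d v = d' v + (if v = l then 1 else 0) + (if v = j then 1 else 0))
    (hj : 2 ≤ d j ∨ ∀ v, d v ≤ 1) (heven : Even (∑ v, d v))
    (hforest : ∑ v, d v ≤ 2 * #{v | d v ≠ 0} - 2) :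
    ∑ v, d' v ≤ 2 * #{v | d' v ≠ 0} - 2 := by
  have hsum := sum_eq_sum_add_ite hd univ
  simp only [mem_univ, if_true] at hsum
  rcases hj with hj | hle
  · have hsupp : #{v | d v ≠ 0} ≤ #{v | d' v ≠ 0} + 1 := by
      refine (card_le_card fun v hv => ?_).trans (card_insert_le l _)
      rcases eq_or_ne v l with rfl | hvl
      · exact mem_insert_self _ _
      refine mem_insert_of_mem (mem_filter.mpr ⟨mem_univ v, ?_⟩)
      have hv := (mem_filter.mp hv).2
      have hdv := hd v
      rw [if_neg hvl] at hdv
      split_ifs at hdv with hvj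
      · subst hvj; omega
      · omega
    omega
  · have hle' : ∀ v, d' v ≤ 1 := fun v => by have := hd v; have := hle v; omega
    have := sum_eq_card_support_of_le_one hle
    have := sum_eq_card_support_of_le_one hle'
    obtain ⟨r, hr⟩ := heven
    omega

/-- The truncated subtraction makes the middle condition read `∑ v, d v = 0` when `d = 0`. -/
def IsAdmissible (d : V → ℕ) (T : Finset V) : Prop :=
  Even (∑ v, d v) ∧ ∑ v, d v ≤ 2 * #{v | d v ≠ 0} - 2 ∧ 2 * ∑ v ∈ T, d v ≤ ∑ v, d v

lemma IsAdmissible.exists_eq_add_edge [DecidableEq V] {d : V → ℕ} {T : Finset V}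
    (h : IsAdmissible d T) (h0 : ∑ v, d v ≠ 0) :
    ∃ l j, l ≠ j ∧ ¬(l ∈ T ∧ j ∈ T) ∧ ∃ d' : V → ℕ, IsAdmissible d' T ∧ d' l = 0 ∧
      (∀ v, d v = d' v + (if v = l then 1 else 0) + (if v = j then 1 else 0)) ∧
      ∑ v, d' v < ∑ v, d v := by
  obtain ⟨heven, hforest, hT⟩ := h
  obtain ⟨l, j, hl, hj, hjmax, hlj, hTlj, hout⟩ := exists_leaf_pair T h0 hforest hT
  set d' : V → ℕ := fun v => d v - (if v = l then 1 else 0) - (if v = j then 1 else 0)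
  have hd : ∀ v, d v = d' v + (if v = l then 1 else 0) + (if v = j then 1 else 0) := fun v => by
    simp only [d']
    split_ifs <;> subst_vars <;> first | omega | contradiction
  have hsum := sum_eq_sum_add_ite hd univ
  have hsumT := sum_eq_sum_add_ite hd T
  simp only [mem_univ, if_true] at hsum
  have hT' : 2 * ∑ v ∈ T, d' v ≤ ∑ v, d' v := by
    obtain ⟨r, hr⟩ := heven
    by_cases hlT : l ∈ T <;> by_cases hjT : j ∈ T <;>
      simp only [hlT, hjT, if_true, if_false] at hsumT
    · exact absurd ⟨hlT, hjT⟩ hTlj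
    · omega
    · omega
    · have := hout hlT hjT
      omega
  obtain ⟨r, hr⟩ := heven
  refine ⟨l, j, hlj, hTlj, d', ⟨⟨r - 1, by omega⟩, ?_, hT'⟩, by simp [d', hl], hd, by omega⟩
  exact sum_le_two_mul_card_support_of_eq_add hd hjmax ⟨r, hr⟩ hforest

theorem IsAdmissible.exists_isAcyclic [DecidableEq V] {d : V → ℕ} {T : Finset V}
    (h : IsAdmissible d T) :
    ∃ F : SimpleGraph V, F.IsAcyclic ∧ (∀ v, deg F v = d v) ∧ IndepSet F T := by
  induction hm : ∑ v, d v using Nat.strong_induction_on generalizing d with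
  | _ m ih =>
  rcases eq_or_ne m 0 with rfl | hm0
  · refine ⟨⊥, isAcyclic_bot, fun v => ?_, fun _ _ _ _ => id⟩
    rw [deg_bot, sum_eq_zero_iff.mp hm v (mem_univ v)]
  obtain ⟨l, j, hlj, hTlj, d', h', hl', hd, hlt⟩ := h.exists_eq_add_edge (hm ▸ hm0)
  obtain ⟨F, hF, hdeg, hind⟩ := ih _ (hm ▸ hlt) h' rfl
  have hnr : ¬F.Reachable l j := not_reachable_of_deg_eq_zero hlj ((hdeg l).trans hl')
  refine ⟨F ⊔ edge l j, hF.sup_edge_of_not_reachable hnr, fun v => ?_, ?_⟩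
  · rw [deg_sup_edge hlj fun h => hnr h.reachable, hdeg, hd]
  · rintro u hu v hv (huv | huv)
    · exact hind u hu v hv huv
    rcases (edge_adj ..).mp huv with ⟨⟨rfl, rfl⟩ | ⟨rfl, rfl⟩, -⟩
    · exact hTlj ⟨hu, hv⟩
    · exact hTlj ⟨hv, hu⟩

end DegreeData

theorem stmt19_general {n : ℕ} (d : Fin n → ℕ) (hpos : ∀ i, 1 ≤ d i)
    (heven : Even (∑ i, d i)) (hsum : ∑ i, d i ≤ 2 * n - 2)
    (k : ℕ) :
    (∃ F : SimpleGraph (Fin n), IsForestReal d F ∧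
        DomSet F {i | (i : ℕ) < k} ∧ IndepSet F {i | k ≤ (i : ℕ)}) ↔
      ssum d k ≤ psum d k := by
  set T : Finset (Fin n) := {i | k ≤ (i : ℕ)}
  have hTcoe : {i : Fin n | k ≤ (i : ℕ)} = T := by ext; simp [T]
  have hTcompl : {i : Fin n | (i : ℕ) < k} = (↑T)ᶜ := by ext; simp [T]
  have hssum : ssum d k = ∑ i ∈ T, d i := (sum_filter _ _).symm
  have hpsum : psum d k = ∑ i ∈ Tᶜ, d i := by
    rw [psum, ← sum_filter]; congr 1; ext; simp [T]
  rw [hssum, hpsum, hTcompl, hTcoe]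
  constructor
  · rintro ⟨F, ⟨-, hdeg⟩, -, hind⟩
    simpa only [hdeg] using sum_deg_le_sum_deg_compl_of_indepSet F hind
  · intro hle
    have hsupp : #{i | d i ≠ 0} = n := by
      simp [filter_true_of_mem fun i _ => Nat.one_le_iff_ne_zero.mp (hpos i)]
    have hadm : IsAdmissible d T :=
      ⟨heven, by rwa [hsupp], by have := sum_add_sum_compl T d; omega⟩
    obtain ⟨F, hF, hdeg, hind⟩ := hadm.exists_isAcyclic
    refine ⟨F, ⟨hF, hdeg⟩, domSet_compl_of_indepSet hind fun i _ => ?_, hind⟩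
    rw [hdeg]
    exact Nat.one_le_iff_ne_zero.mp (hpos i)

theorem stmt19 {n : ℕ} (d : Fin n → ℕ) (hd : Antitone d) (hpos : ∀ i, 1 ≤ d i)
    (heven : Even (∑ i, d i)) (hsum : ∑ i, d i ≤ 2 * n - 2)
    (k : ℕ) (hk1 : 1 ≤ k) (hkn : k ≤ n) :
    (∃ F : SimpleGraph (Fin n), IsForestReal d F ∧
        DomSet F {i | (i : ℕ) < k} ∧ IndepSet F {i | k ≤ (i : ℕ)}) ↔
      ssum d k ≤ psum d k :=
  stmt19_general d hpos heven hsum k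
end
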